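/- arXiv:2003.12089 — 6 statements merged into one kernel-verified Lean document; each statement's English description precedes it below -/
import Mathlib

section
/- Let B, H, M be a solution of the brood–bee–mite delay system with initial data satisfying B₀(t) > 0 for all t ∈ [−τ, 0], H(0) > 0 and M(0) > 0. Then B(t) > 0, H(t) > 0 and M(t) > 0 for all t > 0. -/
/-!
Let `T` be the first time at which one of `B`, `H`, `M` vanishes. On `[0, T]` the equations for
`M` and `H` have the form `f' ≥ -k f` with `k` bounded, so `M` and `H` are still positive at `T`.
For `B`, let `μ = d_b + α_b M / (a + B)` be the brood mortality and `β` the brood input (`B₀` on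
`[-τ, 0]`, `r H² / (K + H²)` afterwards). With `P(t) = ∫₀ᵗ μ` the survival factor is
`E(t) = exp (P(t - τ) - P(t))`, so `W = B e^P` satisfies `W'(t) = G(t) - G(t - τ)` for `G = e^P β`.
Integrating, `W(T) = B(0) - ∫_{-τ}^0 G + ∫_{T-τ}^T G`; here `B(0) = ∫_{-τ}^0 B₀ ≥ ∫_{-τ}^0 G` since
`P ≤ 0` on `[-τ, 0]`, and the last integral is positive. Hence `B(T) > 0` as well.
-/

open Real Filter Set

/-- The survival factor `E(t) = exp(-∫_{t-τ}^{t} (d_b + α_b M(s)/(a + B(s))) ds)`. -/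
noncomputable def Esurv (db αb a τ : ℝ) (B M : ℝ → ℝ) (t : ℝ) : ℝ :=
  Real.exp (-∫ s in (t - τ)..t, (db + αb * M s / (a + B s)))

/-- A solution of the brood–bee–mite delay system with parameters
`r, K, d_b, d_h, d_m, α_b, α_h, c, a, τ` and initial brood history `B₀`. -/
structure BHMSolution (r K db dh dm αb αh c a τ : ℝ) (B₀ B H M : ℝ → ℝ) : Prop where
  cont_B₀ : ContinuousOn B₀ (Set.Icc (-τ) 0)
  cont_B : ContinuousOn B (Set.Ici (-τ))
  cont_H : ContinuousOn H (Set.Ici (-τ))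
  cont_M : ContinuousOn M (Set.Ici (-τ))
  init_B : ∀ t ∈ Set.Icc (-τ) (0 : ℝ), B t = B₀ t
  init_H : ∀ t ∈ Set.Icc (-τ) (0 : ℝ), H t = H 0
  init_M : ∀ t ∈ Set.Icc (-τ) (0 : ℝ), M t = M 0
  B_zero : B 0 = ∫ t in (-τ)..(0 : ℝ), B₀ t
  deriv_B₁ : ∀ t ∈ Set.Ioc (0 : ℝ) τ, HasDerivAt B
      (r * H t ^ 2 / (K + H t ^ 2) - αb * B t * M t / (a + B t) - db * B t
        - Esurv db αb a τ B M t * B₀ (t - τ)) t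
  deriv_H₁ : ∀ t ∈ Set.Ioc (0 : ℝ) τ, HasDerivAt H
      (Esurv db αb a τ B M t * B₀ (t - τ) - αh * H t * M t / (a + H t) - dh * H t) t
  deriv_B₂ : ∀ t, τ < t → HasDerivAt B
      (r * H t ^ 2 / (K + H t ^ 2) - αb * B t * M t / (a + B t) - db * B t
        - Esurv db αb a τ B M t * (r * H (t - τ) ^ 2 / (K + H (t - τ) ^ 2))) t
  deriv_H₂ : ∀ t, τ < t → HasDerivAt H
      (Esurv db αb a τ B M t * (r * H (t - τ) ^ 2 / (K + H (t - τ) ^ 2))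
        - αh * H t * M t / (a + H t) - dh * H t) t
  deriv_M : ∀ t, (0 : ℝ) < t → HasDerivAt M
      (c * αb * B t * M t / (a + B t) - dm * M t) t

theorem ContinuousOn.exists_first_zero {g : ℝ → ℝ} {a b : ℝ} (hg : ContinuousOn g (Icc a b))
    (hab : a ≤ b) (ha : 0 < g a) (hb : g b ≤ 0) :
    ∃ T ∈ Ioc a b, g T = 0 ∧ ∀ t ∈ Ico a T, 0 < g t := by
  set S := Icc a b ∩ g ⁻¹' Iic 0
  have hS : IsClosed S := hg.preimage_isClosed_of_isClosed isClosed_Icc isClosed_Iic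
  have hbdd : BddBelow S := ⟨a, fun t ht => ht.1.1⟩
  have hTS : sInf S ∈ S := hS.csInf_mem ⟨b, ⟨hab, le_rfl⟩, hb⟩ hbdd
  set T := sInf S
  have haT : a < T := hTS.1.1.lt_of_ne fun h => (h ▸ ha).not_ge hTS.2
  have hpos : ∀ t ∈ Ico a T, 0 < g t := fun t ht =>
    not_le.mp fun h => (notMem_of_lt_csInf ht.2 hbdd) ⟨⟨ht.1, ht.2.le.trans hTS.1.2⟩, h⟩
  obtain ⟨z, hz, hgz⟩ : (0 : ℝ) ∈ g '' Icc a T :=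
    intermediate_value_Icc' haT.le (hg.mono (Icc_subset_Icc_right hTS.1.2)) ⟨hTS.2, ha.le⟩
  have hzT : z = T := le_antisymm hz.2 (csInf_le hbdd ⟨⟨hz.1, hz.2.trans hTS.1.2⟩, hgz.le⟩)
  exact ⟨T, ⟨haT, hTS.1.2⟩, hzT ▸ hgz, hpos⟩

theorem monotoneOn_mul_exp_of_hasDerivAt {f f' : ℝ → ℝ} {a b C : ℝ}
    (hf : ContinuousOn f (Icc a b)) (hd : ∀ t ∈ Ioo a b, HasDerivAt f (f' t) t)
    (hle : ∀ t ∈ Ioo a b, 0 ≤ f' t + C * f t) :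
    MonotoneOn (fun t => f t * exp (C * t)) (Icc a b) := by
  have hexp (t : ℝ) : HasDerivAt (fun t => exp (C * t)) (exp (C * t) * C) t := by
    simpa using ((hasDerivAt_id t).const_mul C).exp
  refine monotoneOn_of_hasDerivWithinAt_nonneg (f' := fun t => (f' t + C * f t) * exp (C * t))
    (convex_Icc a b) (hf.mul (continuous_exp.comp (continuous_const_mul C)).continuousOn)
    (fun t ht => ?_) (fun t ht => ?_)
  · rw [interior_Icc] at ht ⊢
    exact (((hd t ht).mul (hexp t)).congr_deriv (by ring)).hasDerivWithinAt
  · rw [interior_Icc] at ht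
    exact mul_nonneg (hle t ht) (exp_pos _).le

theorem pos_of_hasDerivAt_ge_neg_mul {f f' k : ℝ → ℝ} {a b : ℝ} (hab : a ≤ b)
    (hf : ContinuousOn f (Icc a b)) (hk : ContinuousOn k (Icc a b)) (ha : 0 < f a)
    (hnn : ∀ t ∈ Ioo a b, 0 ≤ f t) (hd : ∀ t ∈ Ioo a b, HasDerivAt f (f' t) t)
    (hle : ∀ t ∈ Ioo a b, -(k t * f t) ≤ f' t) : 0 < f b := by
  obtain ⟨C, hC⟩ := isCompact_Icc.bddAbove_image hk
  have hkC : ∀ t ∈ Ioo a b, 0 ≤ f' t + C * f t := fun t ht => by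
    nlinarith [hle t ht, hnn t ht, hC (mem_image_of_mem k (Ioo_subset_Icc_self ht))]
  have hmono := monotoneOn_mul_exp_of_hasDerivAt hf hd hkC (left_mem_Icc.2 hab)
    (right_mem_Icc.2 hab) hab
  exact pos_of_mul_pos_left ((mul_pos ha (exp_pos _)).trans_le hmono) (exp_pos _).le

open MeasureTheory intervalIntegral

theorem sub_eq_integral_sub_integral_of_hasDerivAt_sub_delay {W G : ℝ → ℝ} {τ T : ℝ}
    (hτ : 0 ≤ τ) (hT : 0 ≤ T) (hW : ContinuousOn W (Icc 0 T))
    (hG : IntervalIntegrable G volume (-τ) T)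
    (hd : ∀ t ∈ Ioo 0 T, HasDerivAt W (G t - G (t - τ)) t) :
    W T - W 0 = (∫ s in (T - τ)..T, G s) - ∫ s in (-τ)..0, G s := by
  have hG' {u v : ℝ} (hu : u ∈ Icc (-τ) T) (hv : v ∈ Icc (-τ) T) :
      IntervalIntegrable G volume u v :=
    hG.mono_set (uIcc_subset_uIcc (by rwa [uIcc_of_le (by linarith)])
      (by rwa [uIcc_of_le (by linarith)]))
  have hτ_mem : -τ ∈ Icc (-τ) T := ⟨le_rfl, by linarith⟩
  have h0_mem : (0 : ℝ) ∈ Icc (-τ) T := ⟨by linarith, hT⟩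
  have hT_mem : T ∈ Icc (-τ) T := ⟨by linarith, le_rfl⟩
  have hTτ_mem : T - τ ∈ Icc (-τ) T := ⟨by linarith, by linarith⟩
  have hshift : IntervalIntegrable (fun t => G (t - τ)) volume 0 T := by
    simpa using (hG' hτ_mem hTτ_mem).comp_sub_right τ
  rw [← integral_eq_sub_of_hasDerivAt_of_le hT hW hd ((hG' h0_mem hT_mem).sub hshift),
    integral_sub (hG' h0_mem hT_mem) hshift, integral_comp_sub_right, zero_sub]
  have h₁ := integral_add_adjacent_intervals (hG' hτ_mem h0_mem) (hG' h0_mem hT_mem)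
  have h₂ := integral_add_adjacent_intervals (hG' hτ_mem hTτ_mem) (hG' hTτ_mem hT_mem)
  linarith

theorem hasDerivAt_mul_exp_integral_of_delay_balance {B β μ : ℝ → ℝ} {τ T t : ℝ}
    (hτ : 0 ≤ τ) (hμ : ContinuousOn μ (Icc (-τ) T)) (ht : t ∈ Ioo 0 T)
    (hd : HasDerivAt B (β t - μ t * B t - exp (-∫ s in (t - τ)..t, μ s) * β (t - τ)) t) :
    HasDerivAt (fun x => B x * exp (∫ s in 0..x, μ s))
      (exp (∫ s in 0..t, μ s) * β t - exp (∫ s in 0..(t - τ), μ s) * β (t - τ)) t := by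
  have h0 : (0 : ℝ) ∈ Icc (-τ) T := ⟨neg_nonpos.2 hτ, ht.1.le.trans ht.2.le⟩
  have hμ' {u : ℝ} (hu : u ∈ Icc (-τ) T) : IntervalIntegrable μ volume 0 u :=
    (hμ.mono (uIcc_subset_Icc h0 hu)).intervalIntegrable
  have ht' : t ∈ Ioo (-τ) T := ⟨by linarith [ht.1], ht.2⟩
  have hP : HasDerivAt (fun x => ∫ s in 0..x, μ s) (μ t) t :=
    integral_hasDerivAt_right (hμ' (Ioo_subset_Icc_self ht'))
      ((hμ.mono Ioo_subset_Icc_self).stronglyMeasurableAtFilter isOpen_Ioo t ht')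
      (hμ.continuousAt (Icc_mem_nhds ht'.1 ht'.2))
  have hE : exp (∫ s in 0..t, μ s) * exp (-∫ s in (t - τ)..t, μ s)
      = exp (∫ s in 0..(t - τ), μ s) := by
    have h := integral_interval_sub_left (hμ' (Ioo_subset_Icc_self ht'))
      (hμ' (u := t - τ) ⟨by linarith [ht.1], by linarith [ht.2]⟩)
    rw [← exp_add]
    congr 1
    linarith
  exact (hd.mul hP.exp).congr_deriv (by linear_combination (-β (t - τ)) * hE)

theorem pos_of_hasDerivAt_delay_balance {B β μ : ℝ → ℝ} {τ T : ℝ} (hτ : 0 < τ) (hT : 0 < T)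
    (hB : ContinuousOn B (Icc 0 T)) (hμ : ContinuousOn μ (Icc (-τ) T))
    (hμ_nn : ∀ s ∈ Icc (-τ) 0, 0 ≤ μ s) (hβ : IntervalIntegrable β volume (-τ) T)
    (hβ_pos : ∀ s ∈ Ico (-τ) T, 0 < β s) (hB0 : ∫ s in (-τ)..0, β s ≤ B 0)
    (hd : ∀ t ∈ Ioo 0 T,
      HasDerivAt B (β t - μ t * B t - exp (-∫ s in (t - τ)..t, μ s) * β (t - τ)) t) :
    0 < B T := by
  set P := fun x => ∫ s in 0..x, μ s
  have hP : ContinuousOn P (Icc (-τ) T) := by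
    have h0 : (0 : ℝ) ∈ uIcc (-τ) T := by rw [uIcc_of_le (by linarith)]; exact ⟨by linarith, hT.le⟩
    simpa only [uIcc_of_le (by linarith : -τ ≤ T)] using
      continuousOn_primitive_interval' (hμ.intervalIntegrable_of_Icc (μ := volume) (by linarith)) h0
  set G := fun s => exp (P s) * β s
  have hG : IntervalIntegrable G volume (-τ) T :=
    hβ.continuousOn_mul (by rw [uIcc_of_le (by linarith)]; exact hP.rexp)
  have hW := sub_eq_integral_sub_integral_of_hasDerivAt_sub_delay (W := fun t => B t * exp (P t))
    hτ.le hT.le (hB.mul (hP.mono (Icc_subset_Icc_left (by linarith))).rexp) hG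
    (fun t ht => hasDerivAt_mul_exp_integral_of_delay_balance hτ.le hμ ht (hd t ht))
  have hP_nonpos : ∀ s ∈ Icc (-τ) 0, P s ≤ 0 := fun s hs => by
    rw [← neg_nonneg, ← integral_symm]
    exact integral_nonneg hs.2 fun u hu => hμ_nn u ⟨hs.1.trans hu.1, hu.2⟩
  have hG_le : ∫ s in (-τ)..0, G s ≤ ∫ s in (-τ)..0, β s := by
    have hsub : uIcc (-τ) 0 ⊆ uIcc (-τ) T :=
      uIcc_subset_uIcc left_mem_uIcc (mem_uIcc_of_le (by linarith) hT.le)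
    exact integral_mono_on (by linarith) (hG.mono_set hsub) (hβ.mono_set hsub) fun s hs =>
      mul_le_of_le_one_left (hβ_pos s ⟨hs.1, hs.2.trans_lt hT⟩).le
        (exp_le_one_iff.2 (hP_nonpos s hs))
  have hG_pos : 0 < ∫ s in (T - τ)..T, G s := by
    refine intervalIntegral_pos_of_pos_on (hG.mono_set ?_) (fun s hs => ?_) (by linarith)
    · exact uIcc_subset_uIcc (mem_uIcc_of_le (by linarith) (by linarith)) right_mem_uIcc
    · exact mul_pos (exp_pos _) (hβ_pos s ⟨by linarith [hs.1], hs.2⟩)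
  have hWT : 0 < B T * exp (P T) := by
    have hP0 : P 0 = 0 := integral_same
    rw [hP0, exp_zero, mul_one] at hW
    linarith
  exact pos_of_mul_pos_left hWT (exp_pos _).le

noncomputable def birthRate (r K : ℝ) (B₀ H : ℝ → ℝ) (s : ℝ) : ℝ :=
  if s ≤ 0 then B₀ s else r * H s ^ 2 / (K + H s ^ 2)

noncomputable def mortalityRate (db αb a : ℝ) (B M : ℝ → ℝ) (s : ℝ) : ℝ :=
  db + αb * M s / (a + B s)

section

variable {r K db dh dm αb αh c a τ T : ℝ} {B₀ B H M : ℝ → ℝ}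

theorem birthRate_nonneg (hr : 0 ≤ r) (hK : 0 ≤ K) (hB₀ : ∀ s ∈ Icc (-τ) 0, 0 ≤ B₀ s) {s : ℝ}
    (hs : -τ ≤ s) : 0 ≤ birthRate r K B₀ H s := by
  unfold birthRate
  split_ifs with h
  · exact hB₀ s ⟨hs, h⟩
  · positivity

theorem birthRate_pos (hr : 0 < r) (hK : 0 ≤ K) (hB₀ : ∀ s ∈ Icc (-τ) 0, 0 < B₀ s) {s : ℝ}
    (hs : -τ ≤ s) (hH : 0 < s → 0 < H s) : 0 < birthRate r K B₀ H s := by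
  unfold birthRate
  split_ifs with h
  · exact hB₀ s ⟨hs, h⟩
  · have := hH (not_le.1 h)
    positivity

namespace BHMSolution

theorem hasDerivAt_B (hsol : BHMSolution r K db dh dm αb αh c a τ B₀ B H M) {t : ℝ} (ht : 0 < t) :
    HasDerivAt B (birthRate r K B₀ H t - mortalityRate db αb a B M t * B t
      - Esurv db αb a τ B M t * birthRate r K B₀ H (t - τ)) t := by
  rcases le_or_gt t τ with htτ | htτ
  · refine (hsol.deriv_B₁ t ⟨ht, htτ⟩).congr_deriv ?_
    simp only [birthRate, mortalityRate, if_neg ht.not_ge, if_pos (sub_nonpos.2 htτ)]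
    ring
  · refine (hsol.deriv_B₂ t htτ).congr_deriv ?_
    simp only [birthRate, mortalityRate, if_neg ht.not_ge, if_neg (sub_pos.2 htτ).not_ge]
    ring

theorem hasDerivAt_H (hsol : BHMSolution r K db dh dm αb αh c a τ B₀ B H M) {t : ℝ} (ht : 0 < t) :
    HasDerivAt H (Esurv db αb a τ B M t * birthRate r K B₀ H (t - τ)
      - αh * H t * M t / (a + H t) - dh * H t) t := by
  rcases le_or_gt t τ with htτ | htτ
  · simpa only [birthRate, if_pos (sub_nonpos.2 htτ)] using hsol.deriv_H₁ t ⟨ht, htτ⟩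
  · simpa only [birthRate, if_neg (sub_pos.2 htτ).not_ge] using hsol.deriv_H₂ t htτ

theorem B_zero_pos (hsol : BHMSolution r K db dh dm αb αh c a τ B₀ B H M) (hτ : 0 < τ)
    (hB₀ : ∀ s ∈ Icc (-τ) 0, 0 < B₀ s) : 0 < B 0 :=
  hsol.B_zero ▸ intervalIntegral.intervalIntegral_pos_of_pos_on
    (hsol.cont_B₀.intervalIntegrable_of_Icc (by linarith))
    (fun s hs => hB₀ s (Ioo_subset_Icc_self hs)) (by linarith)

theorem intervalIntegrable_birthRate (hsol : BHMSolution r K db dh dm αb αh c a τ B₀ B H M)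
    (hK : 0 < K) (hτ : 0 ≤ τ) (hT : 0 ≤ T) :
    IntervalIntegrable (birthRate r K B₀ H) volume (-τ) T := by
  have hH : ContinuousOn H (Icc 0 T) := hsol.cont_H.mono fun s hs => mem_Ici.2 (by linarith [hs.1])
  have h₁ : IntervalIntegrable (birthRate r K B₀ H) volume (-τ) 0 :=
    (hsol.cont_B₀.intervalIntegrable_of_Icc (neg_nonpos.2 hτ)).congr_uIoo fun s hs => by
      rw [uIoo_of_le (neg_nonpos.2 hτ)] at hs
      simp only [birthRate, if_pos hs.2.le]
  have h₂ : IntervalIntegrable (birthRate r K B₀ H) volume 0 T :=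
    (ContinuousOn.intervalIntegrable_of_Icc (u := fun s => r * H s ^ 2 / (K + H s ^ 2)) hT
      ((continuousOn_const.mul (hH.pow 2)).div (continuousOn_const.add (hH.pow 2))
        fun s _ => (by positivity : 0 < K + H s ^ 2).ne')).congr_uIoo fun s hs => by
      rw [uIoo_of_le hT] at hs
      simp only [birthRate, if_neg hs.1.not_ge]
  exact h₁.trans h₂

theorem continuousOn_mortalityRate (hsol : BHMSolution r K db dh dm αb αh c a τ B₀ B H M)
    (ha : 0 < a) (hB : ∀ s ∈ Icc (-τ) T, 0 ≤ B s) :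
    ContinuousOn (mortalityRate db αb a B M) (Icc (-τ) T) :=
  continuousOn_const.add <| (continuousOn_const.mul (hsol.cont_M.mono Icc_subset_Ici_self)).div
    (continuousOn_const.add (hsol.cont_B.mono Icc_subset_Ici_self))
    fun s hs => by linarith [hB s hs]

theorem M_pos (hsol : BHMSolution r K db dh dm αb αh c a τ B₀ B H M) (hτ : 0 ≤ τ) (hT : 0 ≤ T)
    (ha : 0 < a) (hM0 : 0 < M 0) (hB : ∀ t ∈ Icc 0 T, 0 ≤ B t) (hM : ∀ t ∈ Icc 0 T, 0 ≤ M t) :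
    0 < M T := by
  have hsub : Icc 0 T ⊆ Ici (-τ) := fun s hs => mem_Ici.2 (by linarith [hs.1])
  refine pos_of_hasDerivAt_ge_neg_mul hT (hsol.cont_M.mono hsub)
    (k := fun t => dm - c * αb * B t / (a + B t)) ?_ hM0 (fun t ht => hM t (Ioo_subset_Icc_self ht))
    (fun t ht => hsol.deriv_M t ht.1) fun t _ => le_of_eq (by ring)
  exact continuousOn_const.sub <| (continuousOn_const.mul (hsol.cont_B.mono hsub)).div
    (continuousOn_const.add (hsol.cont_B.mono hsub)) fun s hs => by linarith [hB s hs]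

theorem H_pos (hsol : BHMSolution r K db dh dm αb αh c a τ B₀ B H M) (hτ : 0 ≤ τ) (hT : 0 ≤ T)
    (hr : 0 ≤ r) (hK : 0 ≤ K) (ha : 0 < a) (hB₀ : ∀ s ∈ Icc (-τ) 0, 0 ≤ B₀ s) (hH0 : 0 < H 0)
    (hH : ∀ t ∈ Icc 0 T, 0 ≤ H t) : 0 < H T := by
  have hsub : Icc 0 T ⊆ Ici (-τ) := fun s hs => mem_Ici.2 (by linarith [hs.1])
  refine pos_of_hasDerivAt_ge_neg_mul hT (hsol.cont_H.mono hsub)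
    (k := fun t => dh + αh * M t / (a + H t)) ?_ hH0 (fun t ht => hH t (Ioo_subset_Icc_self ht))
    (fun t ht => hsol.hasDerivAt_H ht.1) fun t ht => ?_
  · exact continuousOn_const.add <| (continuousOn_const.mul (hsol.cont_M.mono hsub)).div
      (continuousOn_const.add (hsol.cont_H.mono hsub)) fun s hs => by linarith [hH s hs]
  · have hE : 0 ≤ Esurv db αb a τ B M t * birthRate r K B₀ H (t - τ) :=
      mul_nonneg (exp_pos _).le (birthRate_nonneg hr hK hB₀ (by linarith [ht.1]))
    have : αh * H t * M t / (a + H t) = αh * M t / (a + H t) * H t := by ring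
    linarith

theorem B_pos (hsol : BHMSolution r K db dh dm αb αh c a τ B₀ B H M) (hτ : 0 < τ) (hT : 0 < T)
    (hr : 0 < r) (hK : 0 < K) (hdb : 0 ≤ db) (hαb : 0 ≤ αb) (ha : 0 < a)
    (hB₀ : ∀ s ∈ Icc (-τ) 0, 0 < B₀ s) (hM0 : 0 ≤ M 0) (hB : ∀ t ∈ Icc 0 T, 0 ≤ B t)
    (hH : ∀ t ∈ Ioo 0 T, 0 < H t) : 0 < B T := by
  have hB' : ∀ s ∈ Icc (-τ) T, 0 ≤ B s := fun s hs => by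
    rcases le_or_gt s 0 with hs0 | hs0
    · exact hsol.init_B s ⟨hs.1, hs0⟩ ▸ (hB₀ s ⟨hs.1, hs0⟩).le
    · exact hB s ⟨hs0.le, hs.2⟩
  have hμ_nn : ∀ s ∈ Icc (-τ) 0, 0 ≤ mortalityRate db αb a B M s := fun s hs => by
    have := hB' s ⟨hs.1, hs.2.trans hT.le⟩
    rw [mortalityRate, hsol.init_M s hs]
    positivity
  have hB0 : ∫ s in (-τ)..0, birthRate r K B₀ H s = B 0 := by
    rw [hsol.B_zero]
    refine integral_congr fun s hs => ?_
    rw [uIcc_of_le (by linarith)] at hs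
    simp only [birthRate, if_pos hs.2]
  exact pos_of_hasDerivAt_delay_balance hτ hT
    (hsol.cont_B.mono fun s hs => mem_Ici.2 (by linarith [hs.1]))
    (hsol.continuousOn_mortalityRate ha hB') hμ_nn
    (hsol.intervalIntegrable_birthRate hK hτ.le hT.le)
    (fun s hs => birthRate_pos hr hK.le hB₀ hs.1 fun hs0 => hH s ⟨hs0, hs.2⟩) hB0.le
    fun t ht => hsol.hasDerivAt_B ht.1

end BHMSolution

end

theorem bhm_positivity_general (r K db dh dm αb αh c a τ : ℝ)
    (hr : 0 < r) (hK : 0 < K) (hdb : 0 < db)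
    (hαb : 0 < αb) (ha : 0 < a) (hτ : 0 < τ)
    (B₀ B H M : ℝ → ℝ)
    (hsol : BHMSolution r K db dh dm αb αh c a τ B₀ B H M)
    (hB₀pos : ∀ t ∈ Set.Icc (-τ) (0 : ℝ), 0 < B₀ t)
    (hH0 : 0 < H 0) (hM0 : 0 < M 0) :
    ∀ t > (0 : ℝ), 0 < B t ∧ 0 < H t ∧ 0 < M t := by
  intro t₁ ht₁
  by_contra hfail
  set g := fun t => min (B t) (min (H t) (M t))
  have hsub : Icc 0 t₁ ⊆ Ici (-τ) := fun s hs => mem_Ici.2 (by linarith [hs.1])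
  have hg : ContinuousOn g (Icc 0 t₁) := (hsol.cont_B.mono hsub).inf
    ((hsol.cont_H.mono hsub).inf (hsol.cont_M.mono hsub))
  have hg0 : 0 < g 0 := lt_min (hsol.B_zero_pos hτ hB₀pos) (lt_min hH0 hM0)
  have hgt₁ : g t₁ ≤ 0 := not_lt.1 fun h => hfail (by simpa only [g, lt_min_iff] using h)
  obtain ⟨T, hT, hgT, hpos⟩ := hg.exists_first_zero ht₁.le hg0 hgt₁
  have hnn : ∀ t ∈ Icc 0 T, 0 ≤ B t ∧ 0 ≤ H t ∧ 0 ≤ M t := fun t ht => by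
    have : 0 ≤ g t := ht.2.eq_or_lt.elim (fun h => (h ▸ hgT).ge) fun h => (hpos t ⟨ht.1, h⟩).le
    simpa only [g, le_min_iff] using this
  have hH : ∀ t ∈ Ioo 0 T, 0 < H t := fun t ht =>
    (lt_min_iff.1 (lt_min_iff.1 (hpos t (Ioo_subset_Ico_self ht))).2).1
  have hBT := hsol.B_pos hτ hT.1 hr hK hdb.le hαb.le ha hB₀pos hM0.le (fun t ht => (hnn t ht).1) hH
  have hHT := hsol.H_pos hτ.le hT.1.le hr.le hK.le ha (fun s hs => (hB₀pos s hs).le) hH0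
    fun t ht => (hnn t ht).2.1
  have hMT := hsol.M_pos hτ.le hT.1.le ha hM0 (fun t ht => (hnn t ht).1) fun t ht => (hnn t ht).2.2
  exact hgT.not_gt (lt_min hBT (lt_min hHT hMT))

/-- positivity of solutions of the brood–bee–mite delay system. -/
theorem bhm_positivity (r K db dh dm αb αh c a τ : ℝ)
    (hr : 0 < r) (hK : 0 < K) (hdb : 0 < db) (hdh : 0 < dh) (hdm : 0 < dm)
    (hαb : 0 < αb) (hαh : 0 < αh) (hc : 0 < c) (ha : 0 < a) (hτ : 0 < τ)
    (B₀ B H M : ℝ → ℝ)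
    (hsol : BHMSolution r K db dh dm αb αh c a τ B₀ B H M)
    (hB₀pos : ∀ t ∈ Set.Icc (-τ) (0 : ℝ), 0 < B₀ t)
    (hH0 : 0 < H 0) (hM0 : 0 < M 0) :
    ∀ t > (0 : ℝ), 0 < B t ∧ 0 < H t ∧ 0 < M t :=
  bhm_positivity_general r K db dh dm αb αh c a τ hr hK hdb hαb ha hτ B₀ B H M hsol hB₀pos hH0 hM0
end

section
/- Let r, K, d_b, d_h, τ be positive reals with d_h < r·e^{−d_b τ}/(2√K). Define H₁ = (r e^{−d_b τ}/(2 d_h))·(1 − √(1 − (2 d_h e^{d_b τ}/r)²·K)) and H₂ = (r e^{−d_b τ}/(2 d_h))·(1 + √(1 − (2 d_h e^{d_b τ}/r)²·K)). Then 0 < H₁ < H₂ and each H_i (i = 1, 2) satisfies e^{−d_b τ}·r H_i²/(K + H_i²) = d_h H_i. -/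
/-!
With `a = r e^{-d_b τ}`, an equilibrium `H ≠ 0` of `a H²/(K + H²) = d_h H` is a root of the
quadratic `d_h H² - a H + d_h K = 0`, whose roots are `a/(2 d_h) (1 ± s)` with
`s² = 1 - (2 d_h/a)² K`. The hypothesis on `d_h` makes `s²` positive and `K > 0` keeps it below
`1`, so both roots are positive and distinct.
-/

open Real

section HillEquilibria

variable {a d K : ℝ}

theorem hill_eq_of_quadratic_eq_zero {H : ℝ} (hK : 0 < K) (hH : d * H ^ 2 - a * H + d * K = 0) :
    a * H ^ 2 / (K + H ^ 2) = d * H := by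
  rw [div_eq_iff (by positivity)]
  linear_combination (-H) * hH

theorem quadratic_eq_zero_of_sq_eq {s : ℝ} (hd : d ≠ 0) (ha : a ≠ 0)
    (hs : s ^ 2 = 1 - (2 * d / a) ^ 2 * K) :
    d * (a / (2 * d) * (1 + s)) ^ 2 - a * (a / (2 * d) * (1 + s)) + d * K = 0 := by
  have hexpand : d * (a / (2 * d) * (1 + s)) ^ 2 - a * (a / (2 * d) * (1 + s)) + d * K
      = a ^ 2 / (4 * d) * (s ^ 2 - (1 - (2 * d / a) ^ 2 * K)) := by
    field_simp
    ring
  rw [hexpand, hs, sub_self, mul_zero]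

theorem sq_div_mul_lt_one_of_lt_div_sqrt (hd : 0 < d) (hK : 0 < K)
    (h : d < a / (2 * √K)) : (2 * d / a) ^ 2 * K < 1 := by
  have hsK : 0 < √K := sqrt_pos.2 hK
  have hlt : 2 * d * √K < a := by
    rw [lt_div_iff₀ (by positivity)] at h
    linarith
  have ha : 0 < a := lt_of_le_of_lt (by positivity) hlt
  calc (2 * d / a) ^ 2 * K
    _ = (2 * d * √K / a) ^ 2 := by
      rw [div_pow, div_pow, mul_pow (2 * d), sq_sqrt hK.le]
      ring
    _ < 1 := by
      rw [sq_lt_one_iff₀ (by positivity)]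
      exact (div_lt_one ha).2 hlt

end HillEquilibria

theorem boundary_equilibria_general (r K db dh τ : ℝ)
    (hr : 0 < r) (hK : 0 < K) (hdh : 0 < dh)
    (hcond : dh < r * Real.exp (-db * τ) / (2 * Real.sqrt K))
    (H₁ H₂ : ℝ)
    (hH₁ : H₁ = r * Real.exp (-db * τ) / (2 * dh)
        * (1 - Real.sqrt (1 - (2 * dh * Real.exp (db * τ) / r) ^ 2 * K)))
    (hH₂ : H₂ = r * Real.exp (-db * τ) / (2 * dh)
        * (1 + Real.sqrt (1 - (2 * dh * Real.exp (db * τ) / r) ^ 2 * K))) :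
    0 < H₁ ∧ H₁ < H₂ ∧
      Real.exp (-db * τ) * (r * H₁ ^ 2 / (K + H₁ ^ 2)) = dh * H₁ ∧
      Real.exp (-db * τ) * (r * H₂ ^ 2 / (K + H₂ ^ 2)) = dh * H₂ := by
  have hrate : 2 * dh * exp (db * τ) / r = 2 * dh / (r * exp (-db * τ)) := by
    rw [neg_mul, exp_neg]
    field_simp
  rw [hrate, sub_eq_add_neg] at hH₁
  rw [hrate] at hH₂
  set a := r * exp (-db * τ)
  have ha : 0 < a := by positivity
  have hD : (2 * dh / a) ^ 2 * K < 1 := sq_div_mul_lt_one_of_lt_div_sqrt hdh hK hcond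
  set s := √(1 - (2 * dh / a) ^ 2 * K)
  have hs_pos : 0 < s := sqrt_pos.2 (by linarith)
  have hs_lt_one : s < 1 := (sqrt_lt' one_pos).2 (by norm_num; positivity)
  have hs_sq : s ^ 2 = 1 - (2 * dh / a) ^ 2 * K := sq_sqrt (by linarith)
  have hequilibrium : ∀ H, dh * H ^ 2 - a * H + dh * K = 0 →
      exp (-db * τ) * (r * H ^ 2 / (K + H ^ 2)) = dh * H := fun H hH => by
    rw [← hill_eq_of_quadratic_eq_zero hK hH]
    ring
  refine ⟨?_, ?_, hequilibrium H₁ ?_, hequilibrium H₂ ?_⟩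
  · rw [hH₁]
    exact mul_pos (by positivity) (by linarith)
  · rw [hH₁, hH₂]
    exact mul_lt_mul_of_pos_left (by linarith) (by positivity)
  · rw [hH₁]
    exact quadratic_eq_zero_of_sq_eq hdh.ne' ha.ne' (by rw [neg_sq, hs_sq])
  · rw [hH₂]
    exact quadratic_eq_zero_of_sq_eq hdh.ne' ha.ne' hs_sq

/-- the two positive boundary equilibria `H₁ < H₂` of the mite-free
subsystem when `d_h < r e^{-d_b τ}/(2√K)`. -/
theorem boundary_equilibria (r K db dh τ : ℝ)
    (hr : 0 < r) (hK : 0 < K) (hdb : 0 < db) (hdh : 0 < dh) (hτ : 0 < τ)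
    (hcond : dh < r * Real.exp (-db * τ) / (2 * Real.sqrt K))
    (H₁ H₂ : ℝ)
    (hH₁ : H₁ = r * Real.exp (-db * τ) / (2 * dh)
        * (1 - Real.sqrt (1 - (2 * dh * Real.exp (db * τ) / r) ^ 2 * K)))
    (hH₂ : H₂ = r * Real.exp (-db * τ) / (2 * dh)
        * (1 + Real.sqrt (1 - (2 * dh * Real.exp (db * τ) / r) ^ 2 * K))) :
    0 < H₁ ∧ H₁ < H₂ ∧
      Real.exp (-db * τ) * (r * H₁ ^ 2 / (K + H₁ ^ 2)) = dh * H₁ ∧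
      Real.exp (-db * τ) * (r * H₂ ^ 2 / (K + H₂ ^ 2)) = dh * H₂ :=
  boundary_equilibria_general r K db dh τ hr hK hdh hcond H₁ H₂ hH₁ hH₂
end

section
/- Let r, K, d_b, d_h, B* be positive reals with (r − B* d_b)² ≤ 3 K d_h², and define Q(H) = −d_h H³ + (r − B* d_b) H² − d_h K H − d_b K B*. Then Q(H) < 0 for all H ≥ 0. -/
/-! A cubic `-d x³ + a x² - d k x - e` with `d, e > 0` factors on `x ≥ 0` as
`-x (d x² - a x + d k) - e`. The quadratic factor has discriminant `a² - 4 d² k`, which is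
nonpositive as soon as `a² ≤ 4 d² k` (a fortiori under `a² ≤ 3 k d²`), so it is nonnegative and
the cubic is at most `-e < 0`. -/

section OrderedField

variable {K : Type*} [Field K] [LinearOrder K] [IsStrictOrderedRing K]

theorem quadratic_nonneg_of_discrim_nonpos {a b c : K} (ha : 0 < a) (h : discrim a b c ≤ 0)
    (x : K) : 0 ≤ a * (x * x) + b * x + c := by
  have hfour : 4 * a * (a * (x * x) + b * x + c) = (2 * a * x + b) ^ 2 - discrim a b c := by
    rw [discrim]; ring
  have : 0 ≤ 4 * a * (a * (x * x) + b * x + c) := by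
    rw [hfour]; linarith [sq_nonneg (2 * a * x + b)]
  exact nonneg_of_mul_nonneg_right this (by positivity)

theorem cubic_neg_of_sq_le {d a k e x : K} (hd : 0 < d) (he : 0 < e)
    (h : a ^ 2 ≤ 4 * d ^ 2 * k) (hx : 0 ≤ x) : -d * x ^ 3 + a * x ^ 2 - d * k * x - e < 0 := by
  have hquad : 0 ≤ d * (x * x) + -a * x + d * k :=
    quadratic_nonneg_of_discrim_nonpos hd (by rw [discrim]; linarith) x
  have hfactor : -d * x ^ 3 + a * x ^ 2 - d * k * x = -(x * (d * (x * x) + -a * x + d * k)) := by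
    ring
  rw [hfactor]
  linarith [mul_nonneg hx hquad]

end OrderedField

theorem cubic_neg_of_small_discriminant_general (r K db dh Bs : ℝ)
    (hK : 0 < K) (hdb : 0 < db) (hdh : 0 < dh) (hBs : 0 < Bs)
    (hdisc : (r - Bs * db) ^ 2 ≤ 3 * K * dh ^ 2)
    (Q : ℝ → ℝ)
    (hQ : ∀ H, Q H = -dh * H ^ 3 + (r - Bs * db) * H ^ 2 - dh * K * H - db * K * Bs) :
    ∀ H ≥ (0 : ℝ), Q H < 0 := by
  intro H hH
  rw [hQ]
  have hKdh : 0 < K * dh ^ 2 := by positivity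
  exact cubic_neg_of_sq_le hdh (by positivity) (by linarith) hH

/-- if `(r - B* d_b)² ≤ 3 K d_h²` then `Q(H) < 0` for all `H ≥ 0`. -/
theorem cubic_neg_of_small_discriminant (r K db dh Bs : ℝ)
    (hr : 0 < r) (hK : 0 < K) (hdb : 0 < db) (hdh : 0 < dh) (hBs : 0 < Bs)
    (hdisc : (r - Bs * db) ^ 2 ≤ 3 * K * dh ^ 2)
    (Q : ℝ → ℝ)
    (hQ : ∀ H, Q H = -dh * H ^ 3 + (r - Bs * db) * H ^ 2 - dh * K * H - db * K * Bs) :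
    ∀ H ≥ (0 : ℝ), Q H < 0 :=
  cubic_neg_of_small_discriminant_general r K db dh Bs hK hdb hdh hBs hdisc Q hQ
end

section
/- Let r, K, d_b, d_h, B* be positive reals with r > B* d_b and d_h < (r − B* d_b)/√(3K), define Q(H) = −d_h H³ + (r − B* d_b) H² − d_h K H − d_b K B*, and let H₂^c = ((r − B* d_b) + √((r − B* d_b)² − 3 K d_h²))/(3 d_h). If Q(H₂^c) > 0, then Q has exactly two positive roots H₁^r < H₂^r, and moreover Q(H) > 0 for H ∈ (H₁^r, H₂^r) while Q(H) < 0 for H ∈ [0, H₁^r) ∪ (H₂^r, ∞). -/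
/-!
`Q` is a cubic with negative leading coefficient whose derivative has the two positive roots
`H₁^c < H₂^c`, so `Q` decreases on `[0, H₁^c]`, increases on `[H₁^c, H₂^c]` and decreases on
`[H₂^c, ∞)`. Since `Q 0 < 0` and `Q → -∞`, the hypothesis `Q H₂^c > 0` yields exactly one sign
change in `(H₁^c, H₂^c)` and one in `(H₂^c, ∞)`, and no other.
-/

open Set Filter

theorem eq_or_eq_of_sign_pattern {f : ℝ → ℝ} {x₁ x₂ : ℝ}
    (hpos : ∀ x ∈ Ioo x₁ x₂, 0 < f x) (hneg₁ : ∀ x ∈ Ico 0 x₁, f x < 0)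
    (hneg₂ : ∀ x ∈ Ioi x₂, f x < 0) {x : ℝ} (hx : 0 ≤ x) (hfx : f x = 0) :
    x = x₁ ∨ x = x₂ := by
  by_contra! hne
  rcases hne.1.lt_or_gt with h₁ | h₁
  · exact (hneg₁ x ⟨hx, h₁⟩).ne hfx
  rcases hne.2.lt_or_gt with h₂ | h₂
  · exact (hpos x ⟨h₁, h₂⟩).ne' hfx
  · exact (hneg₂ x h₂).ne hfx

theorem exists_two_pos_roots_of_strictAntiOn_strictMonoOn_strictAntiOn {f : ℝ → ℝ} {c₁ c₂ : ℝ}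
    (hc₁ : 0 ≤ c₁) (hc : c₁ ≤ c₂) (hcont : ContinuousOn f (Ici 0))
    (hanti₁ : StrictAntiOn f (Icc 0 c₁)) (hmono : StrictMonoOn f (Icc c₁ c₂))
    (hanti₂ : StrictAntiOn f (Ici c₂)) (hf₀ : f 0 < 0) (hfc₂ : 0 < f c₂)
    (hf_atTop : ∀ᶠ x in atTop, f x < 0) :
    ∃ x₁ x₂ : ℝ, 0 < x₁ ∧ x₁ < x₂ ∧ f x₁ = 0 ∧ f x₂ = 0 ∧
      (∀ x > (0 : ℝ), f x = 0 → x = x₁ ∨ x = x₂) ∧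
      (∀ x ∈ Ioo x₁ x₂, 0 < f x) ∧
      (∀ x ∈ Ico (0 : ℝ) x₁, f x < 0) ∧
      (∀ x ∈ Ioi x₂, f x < 0) := by
  have hfc₁ : f c₁ < 0 :=
    (hanti₁.antitoneOn ⟨le_rfl, hc₁⟩ ⟨hc₁, le_rfl⟩ hc₁).trans_lt hf₀
  obtain ⟨x₁, ⟨hc₁x₁, hx₁c₂⟩, hfx₁⟩ := intermediate_value_Ioo hc
    (hcont.mono fun x hx => hc₁.trans hx.1) ⟨hfc₁, hfc₂⟩
  obtain ⟨M, hfM, hc₂M⟩ := (hf_atTop.and (eventually_gt_atTop c₂)).exists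
  obtain ⟨x₂, ⟨hc₂x₂, hx₂M⟩, hfx₂⟩ := intermediate_value_Ioo' hc₂M.le
    (hcont.mono fun x hx => hc₁.trans (hc.trans hx.1)) ⟨hfM, hfc₂⟩
  have hpos : ∀ x ∈ Ioo x₁ x₂, 0 < f x := by
    rintro x ⟨hx₁, hx₂⟩
    rcases le_or_gt x c₂ with hxc₂ | hc₂x
    · exact hfx₁ ▸ hmono ⟨hc₁x₁.le, hx₁c₂.le⟩ ⟨hc₁x₁.le.trans hx₁.le, hxc₂⟩ hx₁
    · exact hfx₂ ▸ hanti₂ hc₂x.le hc₂x₂.le hx₂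
  have hneg₁ : ∀ x ∈ Ico (0 : ℝ) x₁, f x < 0 := by
    rintro x ⟨hx₀, hx₁⟩
    rcases le_or_gt x c₁ with hxc₁ | hc₁x
    · exact (hanti₁.antitoneOn ⟨le_rfl, hc₁⟩ ⟨hx₀, hxc₁⟩ hx₀).trans_lt hf₀
    · exact hfx₁ ▸ hmono ⟨hc₁x.le, hx₁.le.trans hx₁c₂.le⟩ ⟨hc₁x₁.le, hx₁c₂.le⟩ hx₁
  have hneg₂ : ∀ x ∈ Ioi x₂, f x < 0 := fun x hx =>
    hfx₂ ▸ hanti₂ hc₂x₂.le (hc₂x₂.trans hx).le hx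
  exact ⟨x₁, x₂, hc₁.trans_lt hc₁x₁, hx₁c₂.trans hc₂x₂, hfx₁, hfx₂,
    fun x hx => eq_or_eq_of_sign_pattern hpos hneg₁ hneg₂ hx.le, hpos, hneg₁, hneg₂⟩

section Cubic

variable (d a e c : ℝ)

def cubic (x : ℝ) : ℝ := -d * x ^ 3 + a * x ^ 2 - e * x - c

theorem continuous_cubic : Continuous (cubic d a e c) := by
  unfold cubic; fun_prop

theorem deriv_cubic (x : ℝ) : deriv (cubic d a e c) x = -3 * d * x ^ 2 + 2 * a * x - e := by
  have h : HasDerivAt (cubic d a e c) _ x :=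
    ((((hasDerivAt_pow 3 x).const_mul (-d)).add ((hasDerivAt_pow 2 x).const_mul a)).sub
      ((hasDerivAt_id x).const_mul e)).sub_const c
  rw [h.deriv]
  norm_num; ring

variable {d a e}

theorem three_mul_deriv_cubic {s : ℝ} (hs : s ^ 2 = a ^ 2 - 3 * d * e) (x : ℝ) :
    3 * d * deriv (cubic d a e c) x = (3 * d * x - (a - s)) * (a + s - 3 * d * x) := by
  rw [deriv_cubic]; linear_combination -hs

variable {s : ℝ} (hd : 0 < d) (hs₀ : 0 ≤ s) (hs : s ^ 2 = a ^ 2 - 3 * d * e)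
include hd hs

theorem strictMonoOn_cubic :
    StrictMonoOn (cubic d a e c) (Icc ((a - s) / (3 * d)) ((a + s) / (3 * d))) := by
  refine strictMonoOn_of_deriv_pos (convex_Icc _ _) (continuous_cubic d a e c).continuousOn
    fun x hx => pos_of_mul_pos_right (a := 3 * d) ?_ (by positivity)
  rw [interior_Icc, mem_Ioo, div_lt_iff₀ (by positivity), lt_div_iff₀ (by positivity)] at hx
  rw [three_mul_deriv_cubic c hs]
  exact mul_pos (by linarith) (by linarith)

include hs₀ in
theorem strictAntiOn_cubic_Iic : StrictAntiOn (cubic d a e c) (Iic ((a - s) / (3 * d))) := by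
  refine strictAntiOn_of_deriv_neg (convex_Iic _) (continuous_cubic d a e c).continuousOn
    fun x hx => neg_of_mul_neg_right (a := 3 * d) ?_ (by positivity)
  rw [interior_Iic, mem_Iio, lt_div_iff₀ (by positivity)] at hx
  rw [three_mul_deriv_cubic c hs]
  exact mul_neg_of_neg_of_pos (by linarith) (by linarith)

include hs₀ in
theorem strictAntiOn_cubic_Ici : StrictAntiOn (cubic d a e c) (Ici ((a + s) / (3 * d))) := by
  refine strictAntiOn_of_deriv_neg (convex_Ici _) (continuous_cubic d a e c).continuousOn
    fun x hx => neg_of_mul_neg_right (a := 3 * d) ?_ (by positivity)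
  rw [interior_Ici, mem_Ioi, div_lt_iff₀ (by positivity)] at hx
  rw [three_mul_deriv_cubic c hs]
  exact mul_neg_of_pos_of_neg (by linarith) (by linarith)

end Cubic

theorem cubic_eventually_neg {d a e c : ℝ} (hd : 0 < d) (he : 0 ≤ e) (hc : 0 < c) :
    ∀ᶠ x in atTop, cubic d a e c x < 0 := by
  filter_upwards [eventually_ge_atTop 0, eventually_ge_atTop (a / d)] with x hx₀ hxa
  have hdx : a ≤ d * x := (div_le_iff₀' hd).mp hxa
  have : x ^ 2 * (a - d * x) ≤ 0 := mul_nonpos_of_nonneg_of_nonpos (by positivity) (by linarith)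
  unfold cubic
  nlinarith [mul_nonneg he hx₀]

theorem cubic_two_positive_roots_general (r K db dh Bs : ℝ)
    (hK : 0 < K) (hdb : 0 < db) (hdh : 0 < dh) (hBs : 0 < Bs)
    (hdh2 : dh < (r - Bs * db) / Real.sqrt (3 * K))
    (Q : ℝ → ℝ)
    (hQ : ∀ H, Q H = -dh * H ^ 3 + (r - Bs * db) * H ^ 2 - dh * K * H - db * K * Bs)
    (H₂c : ℝ)
    (hH₂c : H₂c = ((r - Bs * db) + Real.sqrt ((r - Bs * db) ^ 2 - 3 * K * dh ^ 2)) / (3 * dh))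
    (hQH₂c : 0 < Q H₂c) :
    ∃ H₁r H₂r : ℝ, 0 < H₁r ∧ H₁r < H₂r ∧ Q H₁r = 0 ∧ Q H₂r = 0 ∧
      (∀ H > (0 : ℝ), Q H = 0 → H = H₁r ∨ H = H₂r) ∧
      (∀ H ∈ Set.Ioo H₁r H₂r, 0 < Q H) ∧
      (∀ H ∈ Set.Ico (0 : ℝ) H₁r, Q H < 0) ∧
      (∀ H ∈ Set.Ioi H₂r, Q H < 0) := by
  set a := r - Bs * db
  have hdh_lt : dh * √(3 * K) < a := (lt_div_iff₀ (by positivity)).mp hdh2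
  have ha : 0 < a := lt_of_le_of_lt (by positivity) hdh_lt
  have hdisc : 3 * K * dh ^ 2 < a ^ 2 :=
    calc 3 * K * dh ^ 2 = (dh * √(3 * K)) ^ 2 := by rw [mul_pow, Real.sq_sqrt (by positivity)]; ring
      _ < a ^ 2 := pow_lt_pow_left₀ hdh_lt (by positivity) two_ne_zero
  set s := √(a ^ 2 - 3 * K * dh ^ 2)
  have hs₀ : 0 ≤ s := Real.sqrt_nonneg _
  have hs : s ^ 2 = a ^ 2 - 3 * dh * (dh * K) := by rw [Real.sq_sqrt (by linarith)]; ring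
  have hsa : s < a := (Real.sqrt_lt' ha).mpr (sub_lt_self _ (by positivity))
  obtain rfl : Q = cubic dh a (dh * K) (db * K * Bs) := funext hQ
  subst hH₂c
  have hc₁ : 0 ≤ (a - s) / (3 * dh) := div_nonneg (by linarith) (by positivity)
  exact exists_two_pos_roots_of_strictAntiOn_strictMonoOn_strictAntiOn hc₁
    (div_le_div_of_nonneg_right (by linarith) (by positivity))
    (continuous_cubic _ _ _ _).continuousOn
    ((strictAntiOn_cubic_Iic _ hdh hs₀ hs).mono fun _ hx => hx.2)
    (strictMonoOn_cubic _ hdh hs) (strictAntiOn_cubic_Ici _ hdh hs₀ hs)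
    (by simp only [cubic]; nlinarith [mul_pos (mul_pos hdb hK) hBs]) hQH₂c
    (cubic_eventually_neg hdh (by positivity) (by positivity))

/-- if `Q(H₂^c) > 0` then `Q` has exactly two positive roots
`H₁^r < H₂^r`, with `Q > 0` on `(H₁^r, H₂^r)` and `Q < 0` on `[0, H₁^r) ∪ (H₂^r, ∞)`. -/
theorem cubic_two_positive_roots (r K db dh Bs : ℝ)
    (hr : 0 < r) (hK : 0 < K) (hdb : 0 < db) (hdh : 0 < dh) (hBs : 0 < Bs)
    (hpos : Bs * db < r)
    (hdh2 : dh < (r - Bs * db) / Real.sqrt (3 * K))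
    (Q : ℝ → ℝ)
    (hQ : ∀ H, Q H = -dh * H ^ 3 + (r - Bs * db) * H ^ 2 - dh * K * H - db * K * Bs)
    (H₂c : ℝ)
    (hH₂c : H₂c = ((r - Bs * db) + Real.sqrt ((r - Bs * db) ^ 2 - 3 * K * dh ^ 2)) / (3 * dh))
    (hQH₂c : 0 < Q H₂c) :
    ∃ H₁r H₂r : ℝ, 0 < H₁r ∧ H₁r < H₂r ∧ Q H₁r = 0 ∧ Q H₂r = 0 ∧
      (∀ H > (0 : ℝ), Q H = 0 → H = H₁r ∨ H = H₂r) ∧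
      (∀ H ∈ Set.Ioo H₁r H₂r, 0 < Q H) ∧
      (∀ H ∈ Set.Ico (0 : ℝ) H₁r, Q H < 0) ∧
      (∀ H ∈ Set.Ioi H₂r, Q H < 0) :=
  cubic_two_positive_roots_general r K db dh Bs hK hdb hdh hBs hdh2 Q hQ H₂c hH₂c hQH₂c
end

section
/- Let r, K, d_b, d_h, d_m, α_b, α_h, c, a, τ be positive reals with c α_b/d_m > 1, and set B* = a/((c α_b/d_m) − 1). Define Q(H) = −d_h H³ + (r − B* d_b) H² − d_h K H − d_b K B*, f₁(H) = r H²/(K + H²), M̃(H) = ( f₁(H) − d_b B* − d_h H ) / ( α_h H/(a + H) + α_b B*/(a + B*) ), and f₂(H) = B*·( α_b M̃(H)/(a + B*) + d_b ) / ( 1 − exp(−( α_b M̃(H)/(a + B*) + d_b ) τ) ). Assume d_h < (r − B* d_b)/√(3K) and Q(H₂^c) > 0, where H₂^c = ((r − B* d_b) + √((r − B* d_b)² − 3 K d_h²))/(3 d_h); let H₁^r < H₂^r be the two positive roots of Q, and set β₁ = (1/d_b)·ln( f₁(H₂^r)/( f₁(H₂^r) − B* d_b) ) and β₂ = (1/d_b)·ln(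 f₁(H₁^r)/( f₁(H₁^r) − B* d_b) ). If β₁ < τ < β₂, then there exists H* ∈ (H₁^r, H₂^r) with f₁(H*) = f₂(H*); moreover M* := M̃(H*) > 0 and the triple (B*, H*, M*) is an equilibrium of the brood–bee–mite system. -/
/-- A triple of nonnegative reals `(B, H, M)` is an equilibrium of the
brood–bee–mite system with parameters `r, K, d_b, d_h, d_m, α_b, α_h, c, a, τ`. -/
def IsEquilibrium (r K db dh dm αb αh c a τ B H M : ℝ) : Prop :=
  0 ≤ B ∧ 0 ≤ H ∧ 0 ≤ M ∧
  (r * H ^ 2 / (K + H ^ 2) - αb * B * M / (a + B) - db * B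
      - r * H ^ 2 / (K + H ^ 2) * Real.exp (-(db + αb * M / (a + B)) * τ) = 0) ∧
  (r * H ^ 2 / (K + H ^ 2) * Real.exp (-(db + αb * M / (a + B)) * τ)
      - αh * H * M / (a + H) - dh * H = 0) ∧
  (c * αb * B * M / (a + B) - dm * M = 0)

/-! The positive roots `H₁ʳ < H₂ʳ` of `Q` are where the mite-free bee balance
`f₁(H) = d_b B* + d_h H` holds, so `M̃` vanishes there and is positive in between (the third
root of `Q` is negative because `Q(0) < 0`). At both endpoints `f₂` is therefore the birth rate
that sustains the brood level `B*` against the mite-free death rate `d_b`; this rate is strictly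
decreasing in the delay, so `β₁ < τ < β₂` says exactly that `f₁ - f₂` changes sign on
`[H₁ʳ, H₂ʳ]`. The intermediate value theorem gives `H*`, where `f₁ = f₂` and the definition of
`M̃` are the brood and bee equations, while `B*` solves the mite equation. -/

open Real Set

section Cubic

variable {d p q s x₁ x₂ : ℝ}

theorem exists_neg_root_cubic_eq_mul (hd : 0 < d) (hs : 0 < s) (hx₁ : 0 < x₁) (h₁₂ : x₁ < x₂)
    (h₁ : -d * x₁ ^ 3 + p * x₁ ^ 2 - q * x₁ - s = 0)
    (h₂ : -d * x₂ ^ 3 + p * x₂ ^ 2 - q * x₂ - s = 0) :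
    ∃ x₃ < 0, ∀ x, -d * x ^ 3 + p * x ^ 2 - q * x - s = d * (x - x₁) * (x₂ - x) * (x - x₃) := by
  obtain ⟨x₃, hx₃⟩ : ∃ x₃, x₃ = p / d - x₁ - x₂ := ⟨_, rfl⟩
  -- with `x₃` fixed by Vieta's sum formula, the difference of the two cubics is affine
  have hdiff : ∀ x, -d * x ^ 3 + p * x ^ 2 - q * x - s - d * (x - x₁) * (x₂ - x) * (x - x₃)
      = (d * (x₁ * x₂ + x₁ * x₃ + x₂ * x₃) - q) * x - (s + d * (x₁ * x₂ * x₃)) := by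
    intro x
    subst hx₃
    field_simp
    ring
  have hA : d * (x₁ * x₂ + x₁ * x₃ + x₂ * x₃) - q = 0 := by
    refine (mul_eq_zero.1 ?_).resolve_right (sub_ne_zero.2 h₁₂.ne)
    linear_combination h₁ - h₂ - hdiff x₁ + hdiff x₂
  have hC : s + d * (x₁ * x₂ * x₃) = 0 := by
    linear_combination hdiff x₁ - h₁ + x₁ * hA
  refine ⟨x₃, ?_, fun x => by linear_combination hdiff x + x * hA - hC⟩
  by_contra! h
  have : 0 ≤ d * (x₁ * x₂ * x₃) :=
    mul_nonneg hd.le (mul_nonneg (mul_nonneg hx₁.le (hx₁.trans h₁₂).le) h)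
  linarith

theorem cubic_nonneg_of_mem_Icc (hd : 0 < d) (hs : 0 < s) (hx₁ : 0 < x₁) (h₁₂ : x₁ < x₂)
    (h₁ : -d * x₁ ^ 3 + p * x₁ ^ 2 - q * x₁ - s = 0)
    (h₂ : -d * x₂ ^ 3 + p * x₂ ^ 2 - q * x₂ - s = 0) {x : ℝ} (hx : x ∈ Icc x₁ x₂) :
    0 ≤ -d * x ^ 3 + p * x ^ 2 - q * x - s := by
  obtain ⟨x₃, hx₃, hfactor⟩ := exists_neg_root_cubic_eq_mul hd hs hx₁ h₁₂ h₁ h₂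
  rw [hfactor]
  exact mul_nonneg (mul_nonneg (mul_nonneg hd.le (sub_nonneg.2 hx.1)) (sub_nonneg.2 hx.2))
    (by linarith [hx.1])

theorem cubic_pos_of_mem_Ioo (hd : 0 < d) (hs : 0 < s) (hx₁ : 0 < x₁) (h₁₂ : x₁ < x₂)
    (h₁ : -d * x₁ ^ 3 + p * x₁ ^ 2 - q * x₁ - s = 0)
    (h₂ : -d * x₂ ^ 3 + p * x₂ ^ 2 - q * x₂ - s = 0) {x : ℝ} (hx : x ∈ Ioo x₁ x₂) :
    0 < -d * x ^ 3 + p * x ^ 2 - q * x - s := by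
  obtain ⟨x₃, hx₃, hfactor⟩ := exists_neg_root_cubic_eq_mul hd hs hx₁ h₁₂ h₁ h₂
  rw [hfactor]
  exact mul_pos (mul_pos (mul_pos hd (sub_pos.2 hx.1)) (sub_pos.2 hx.2)) (by linarith [hx.1])

end Cubic

section SustainingBirth

-- The birth rate `f` solving `f - E B - f e^{-E τ} = 0`: it keeps the brood at level `B` when
-- brood die at per-capita rate `E` during a development time `τ`.
noncomputable def sustainingBirth (B τ E : ℝ) : ℝ := B * E / (1 - exp (-E * τ))

noncomputable def delayThreshold (B E x : ℝ) : ℝ := 1 / E * log (x / (x - B * E))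

variable {B τ E x : ℝ}

theorem one_sub_exp_neg_mul_pos (hE : 0 < E) (hτ : 0 < τ) : 0 < 1 - exp (-E * τ) := by
  rw [sub_pos, exp_lt_one_iff, neg_mul, neg_lt_zero]
  exact mul_pos hE hτ

theorem continuousOn_sustainingBirth (hτ : 0 < τ) : ContinuousOn (sustainingBirth B τ) (Ioi 0) :=
  ContinuousOn.div (by fun_prop) (by fun_prop) fun _ hE => (one_sub_exp_neg_mul_pos hE hτ).ne'

theorem strictAntiOn_sustainingBirth (hB : 0 < B) (hE : 0 < E) :
    StrictAntiOn (fun τ => sustainingBirth B τ E) (Ioi 0) := by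
  intro σ hσ τ hτ hστ
  refine div_lt_div_of_pos_left (by positivity) (one_sub_exp_neg_mul_pos hE hσ) ?_
  exact sub_lt_sub_left (exp_lt_exp.2 (by nlinarith)) 1

theorem delayThreshold_pos (hB : 0 < B) (hE : 0 < E) (hx : B * E < x) :
    0 < delayThreshold B E x := by
  have hBE : 0 < B * E := by positivity
  refine mul_pos (by positivity) (log_pos ?_)
  rw [one_lt_div (by linarith)]
  linarith

theorem sustainingBirth_delayThreshold (hB : 0 < B) (hE : 0 < E) (hx : B * E < x) :
    sustainingBirth B (delayThreshold B E x) E = x := by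
  have hBE : 0 < B * E := by positivity
  have hx0 : 0 < x := hBE.trans hx
  have hexp : exp (-E * delayThreshold B E x) = (x - B * E) / x := by
    rw [delayThreshold, show -E * (1 / E * log (x / (x - B * E))) = -log (x / (x - B * E)) by
      field_simp, exp_neg, exp_log (div_pos hx0 (by linarith)), inv_div]
  rw [sustainingBirth, hexp]
  field_simp
  ring

theorem sustainingBirth_lt_iff (hτ : 0 < τ) (hB : 0 < B) (hE : 0 < E) (hx : B * E < x) :
    sustainingBirth B τ E < x ↔ delayThreshold B E x < τ := by
  conv_lhs => rw [← sustainingBirth_delayThreshold hB hE hx]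
  exact (strictAntiOn_sustainingBirth hB hE).lt_iff_gt hτ (delayThreshold_pos hB hE hx)

theorem lt_sustainingBirth_iff (hτ : 0 < τ) (hB : 0 < B) (hE : 0 < E) (hx : B * E < x) :
    x < sustainingBirth B τ E ↔ τ < delayThreshold B E x := by
  conv_lhs => rw [← sustainingBirth_delayThreshold hB hE hx]
  exact (strictAntiOn_sustainingBirth hB hE).lt_iff_gt (delayThreshold_pos hB hE hx) hτ

end SustainingBirth

namespace BroodMite

-- `birth`, `balanceCubic`, `mites` and `requiredBirth` are the paper's `f₁`, `Q`, `M̃` and `f₂`.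

noncomputable def birth (r K H : ℝ) : ℝ := r * H ^ 2 / (K + H ^ 2)

def balanceCubic (r K db dh B H : ℝ) : ℝ :=
  -dh * H ^ 3 + (r - B * db) * H ^ 2 - dh * K * H - db * K * B

noncomputable def mites (r K db dh αb αh a B H : ℝ) : ℝ :=
  (birth r K H - db * B - dh * H) / (αh * H / (a + H) + αb * B / (a + B))

noncomputable def requiredBirth (r K db dh αb αh a τ B H : ℝ) : ℝ :=
  sustainingBirth B τ (αb * mites r K db dh αb αh a B H / (a + B) + db)

variable {r K db dh dm αb αh c a τ B H : ℝ}

theorem birth_sub_eq_balanceCubic_div (hK : 0 < K) :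
    birth r K H - db * B - dh * H = balanceCubic r K db dh B H / (K + H ^ 2) := by
  rw [birth, balanceCubic]
  field_simp
  ring

theorem mites_eq_zero_of_balanceCubic_eq_zero (hK : 0 < K)
    (hQ : balanceCubic r K db dh B H = 0) : mites r K db dh αb αh a B H = 0 := by
  rw [mites, birth_sub_eq_balanceCubic_div hK, hQ, zero_div, zero_div]

theorem mites_nonneg (hK : 0 < K) (ha : 0 < a) (hαb : 0 ≤ αb) (hαh : 0 ≤ αh) (hB : 0 ≤ B)
    (hH : 0 ≤ H) (hQ : 0 ≤ balanceCubic r K db dh B H) : 0 ≤ mites r K db dh αb αh a B H := by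
  rw [mites, birth_sub_eq_balanceCubic_div hK]
  positivity

theorem mites_pos (hK : 0 < K) (ha : 0 < a) (hαb : 0 ≤ αb) (hαh : 0 < αh) (hB : 0 ≤ B)
    (hH : 0 < H) (hQ : 0 < balanceCubic r K db dh B H) : 0 < mites r K db dh αb αh a B H := by
  rw [mites, birth_sub_eq_balanceCubic_div hK]
  positivity

theorem mul_lt_birth_of_balanceCubic_eq_zero (hK : 0 < K) (hdh : 0 < dh) (hH : 0 < H)
    (hQ : balanceCubic r K db dh B H = 0) : B * db < birth r K H := by
  have hbal : birth r K H - db * B - dh * H = 0 := by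
    rw [birth_sub_eq_balanceCubic_div hK, hQ, zero_div]
  linarith [mul_pos hdh hH]

theorem requiredBirth_eq_of_balanceCubic_eq_zero (hK : 0 < K)
    (hQ : balanceCubic r K db dh B H = 0) :
    requiredBirth r K db dh αb αh a τ B H = sustainingBirth B τ db := by
  rw [requiredBirth, mites_eq_zero_of_balanceCubic_eq_zero hK hQ, mul_zero, zero_div, zero_add]

theorem continuousOn_birth_sub_requiredBirth {s : Set ℝ} (hK : 0 < K) (ha : 0 < a)
    (hαb : 0 ≤ αb) (hαh : 0 < αh) (hB : 0 ≤ B) (hdb : 0 < db) (hτ : 0 < τ) (hs : s ⊆ Ioi 0)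
    (hM : ∀ H ∈ s, 0 ≤ mites r K db dh αb αh a B H) :
    ContinuousOn (fun H => birth r K H - requiredBirth r K db dh αb αh a τ B H) s := by
  have hbirth : Continuous (birth r K) :=
    Continuous.div (by fun_prop) (by fun_prop) fun H => by positivity
  have hmites : ContinuousOn (mites r K db dh αb αh a B) s := by
    refine ContinuousOn.div (by fun_prop) ?_ fun H hH => ?_
    · refine ContinuousOn.add (ContinuousOn.div (by fun_prop) (by fun_prop) fun H hH => ?_)
        continuousOn_const
      have : 0 < H := hs hH
      positivity
    · have : 0 < H := hs hH
      positivity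
  refine hbirth.continuousOn.sub ((continuousOn_sustainingBirth hτ).comp
    (by fun_prop) fun H hH => ?_)
  have := hM H hH
  rw [mem_Ioi]
  positivity

theorem isEquilibrium_of_birth_eq_requiredBirth (hdm : 0 < dm) (hratio : 1 < c * αb / dm)
    (ha : 0 < a) (hαb : 0 ≤ αb) (hαh : 0 < αh) (hdb : 0 < db) (hτ : 0 < τ)
    (hB : B = a / (c * αb / dm - 1)) (hH : 0 < H) (hM : 0 ≤ mites r K db dh αb αh a B H)
    (hbirth : birth r K H = requiredBirth r K db dh αb αh a τ B H) :
    IsEquilibrium r K db dh dm αb αh c a τ B H (mites r K db dh αb αh a B H) := by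
  set M := mites r K db dh αb αh a B H
  have hB0 : 0 < B := hB ▸ div_pos ha (sub_pos.2 hratio)
  have haB : 0 < a + B := by positivity
  have hE : 0 < αb * M / (a + B) + db := by positivity
  have hbees : M * (αh * H / (a + H) + αb * B / (a + B)) = birth r K H - db * B - dh * H :=
    div_mul_cancel₀ _ (by positivity)
  have hbrood : birth r K H * (1 - exp (-(αb * M / (a + B) + db) * τ))
      = B * (αb * M / (a + B) + db) :=
    (eq_div_iff (one_sub_exp_neg_mul_pos hE hτ).ne').1 hbirth
  have hmite : c * αb * B = dm * (a + B) := by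
    have hBρ : B * (c * αb / dm - 1) = a := by
      rw [hB]
      exact div_mul_cancel₀ a (sub_pos.2 hratio).ne'
    rw [← hBρ]
    field_simp
    ring
  rw [birth] at hbees hbrood
  refine ⟨hB0.le, hH.le, hM, ?_, ?_, ?_⟩
  · rw [add_comm db]
    linear_combination hbrood
  · rw [add_comm db]
    linear_combination -hbrood - hbees
  · rw [sub_eq_zero, div_eq_iff haB.ne']
    linear_combination M * hmite

end BroodMite

open BroodMite in
theorem interior_equilibrium_exists_general (r K db dh dm αb αh c a τ : ℝ)
    (hK : 0 < K) (hdb : 0 < db) (hdh : 0 < dh) (hdm : 0 < dm)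
    (hαb : 0 < αb) (hαh : 0 < αh) (ha : 0 < a) (hτ : 0 < τ)
    (hratio : 1 < c * αb / dm)
    (Bs : ℝ) (hBs : Bs = a / (c * αb / dm - 1))
    (Q f₁ Mt f₂ : ℝ → ℝ)
    (hQ : ∀ H, Q H = -dh * H ^ 3 + (r - Bs * db) * H ^ 2 - dh * K * H - db * K * Bs)
    (hf₁ : ∀ H, f₁ H = r * H ^ 2 / (K + H ^ 2))
    (hMt : ∀ H, Mt H = (f₁ H - db * Bs - dh * H)
        / (αh * H / (a + H) + αb * Bs / (a + Bs)))
    (hf₂ : ∀ H, f₂ H = Bs * (αb * Mt H / (a + Bs) + db)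
        / (1 - Real.exp (-(αb * Mt H / (a + Bs) + db) * τ)))
    (H₁r H₂r : ℝ) (hH₁r : 0 < H₁r) (hlt : H₁r < H₂r)
    (hroot1 : Q H₁r = 0) (hroot2 : Q H₂r = 0)
    (β₁ β₂ : ℝ)
    (hβ₁ : β₁ = 1 / db * Real.log (f₁ H₂r / (f₁ H₂r - Bs * db)))
    (hβ₂ : β₂ = 1 / db * Real.log (f₁ H₁r / (f₁ H₁r - Bs * db)))
    (hτ₁ : β₁ < τ) (hτ₂ : τ < β₂) :
    ∃ Hs ∈ Set.Ioo H₁r H₂r, f₁ Hs = f₂ Hs ∧ 0 < Mt Hs ∧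
      IsEquilibrium r K db dh dm αb αh c a τ Bs Hs (Mt Hs) := by
  obtain rfl : f₁ = birth r K := funext hf₁
  obtain rfl : Q = balanceCubic r K db dh Bs := funext hQ
  obtain rfl : Mt = mites r K db dh αb αh a Bs := funext hMt
  obtain rfl : f₂ = requiredBirth r K db dh αb αh a τ Bs := funext hf₂
  subst hβ₁ hβ₂
  have hBs_pos : 0 < Bs := hBs ▸ div_pos ha (sub_pos.2 hratio)
  have hdbKBs : 0 < db * K * Bs := by positivity
  have hH₁ : birth r K H₁r < requiredBirth r K db dh αb αh a τ Bs H₁r := by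
    rw [requiredBirth_eq_of_balanceCubic_eq_zero hK hroot1]
    exact (lt_sustainingBirth_iff hτ hBs_pos hdb
      (mul_lt_birth_of_balanceCubic_eq_zero hK hdh hH₁r hroot1)).2 hτ₂
  have hH₂ : requiredBirth r K db dh αb αh a τ Bs H₂r < birth r K H₂r := by
    rw [requiredBirth_eq_of_balanceCubic_eq_zero hK hroot2]
    exact (sustainingBirth_lt_iff hτ hBs_pos hdb
      (mul_lt_birth_of_balanceCubic_eq_zero hK hdh (hH₁r.trans hlt) hroot2)).2 hτ₁
  have hcont := continuousOn_birth_sub_requiredBirth hK ha hαb.le hαh hBs_pos.le hdb hτ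
    (fun H hH => hH₁r.trans_le hH.1) fun H hH => mites_nonneg hK ha hαb.le hαh.le hBs_pos.le
      (hH₁r.le.trans hH.1) (cubic_nonneg_of_mem_Icc hdh hdbKBs hH₁r hlt hroot1 hroot2 hH)
  obtain ⟨Hs, hHs, hcross⟩ := intermediate_value_Ioo hlt.le hcont
    ⟨sub_neg.2 hH₁, sub_pos.2 hH₂⟩
  have hHs_pos : 0 < Hs := hH₁r.trans hHs.1
  have hMs := mites_pos hK ha hαb.le hαh hBs_pos.le hHs_pos
    (cubic_pos_of_mem_Ioo hdh hdbKBs hH₁r hlt hroot1 hroot2 hHs)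
  have hbirth : birth r K Hs = requiredBirth r K db dh αb αh a τ Bs Hs := sub_eq_zero.1 hcross
  exact ⟨Hs, hHs, hbirth, hMs, isEquilibrium_of_birth_eq_requiredBirth hdm hratio ha hαb.le hαh
    hdb hτ hBs hHs_pos hMs.le hbirth⟩

/-- existence of an interior equilibrium of the brood–bee–mite
system when `τ ∈ (β₁, β₂)`. -/
theorem interior_equilibrium_exists (r K db dh dm αb αh c a τ : ℝ)
    (hr : 0 < r) (hK : 0 < K) (hdb : 0 < db) (hdh : 0 < dh) (hdm : 0 < dm)
    (hαb : 0 < αb) (hαh : 0 < αh) (hc : 0 < c) (ha : 0 < a) (hτ : 0 < τ)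
    (hratio : 1 < c * αb / dm)
    (Bs : ℝ) (hBs : Bs = a / (c * αb / dm - 1))
    (Q f₁ Mt f₂ : ℝ → ℝ)
    (hQ : ∀ H, Q H = -dh * H ^ 3 + (r - Bs * db) * H ^ 2 - dh * K * H - db * K * Bs)
    (hf₁ : ∀ H, f₁ H = r * H ^ 2 / (K + H ^ 2))
    (hMt : ∀ H, Mt H = (f₁ H - db * Bs - dh * H)
        / (αh * H / (a + H) + αb * Bs / (a + Bs)))
    (hf₂ : ∀ H, f₂ H = Bs * (αb * Mt H / (a + Bs) + db)
        / (1 - Real.exp (-(αb * Mt H / (a + Bs) + db) * τ)))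
    (hdh2 : dh < (r - Bs * db) / Real.sqrt (3 * K))
    (H₂c : ℝ)
    (hH₂c : H₂c = ((r - Bs * db) + Real.sqrt ((r - Bs * db) ^ 2 - 3 * K * dh ^ 2)) / (3 * dh))
    (hQH₂c : 0 < Q H₂c)
    (H₁r H₂r : ℝ) (hH₁r : 0 < H₁r) (hlt : H₁r < H₂r)
    (hroot1 : Q H₁r = 0) (hroot2 : Q H₂r = 0)
    (β₁ β₂ : ℝ)
    (hβ₁ : β₁ = 1 / db * Real.log (f₁ H₂r / (f₁ H₂r - Bs * db)))
    (hβ₂ : β₂ = 1 / db * Real.log (f₁ H₁r / (f₁ H₁r - Bs * db)))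
    (hτ₁ : β₁ < τ) (hτ₂ : τ < β₂) :
    ∃ Hs ∈ Set.Ioo H₁r H₂r, f₁ Hs = f₂ Hs ∧ 0 < Mt Hs ∧
      IsEquilibrium r K db dh dm αb αh c a τ Bs Hs (Mt Hs) :=
  interior_equilibrium_exists_general r K db dh dm αb αh c a τ hK hdb hdh hdm hαb hαh ha hτ hratio
    Bs hBs Q f₁ Mt f₂ hQ hf₁ hMt hf₂ H₁r H₂r hH₁r hlt hroot1 hroot2 β₁ β₂ hβ₁ hβ₂ hτ₁ hτ₂
end

section
/- Let B, H, M be a solution of the brood–bee–mite delay system with initial data satisfying B₀(t) > 0 for all t ∈ [−τ, 0], H(0) > 0 and M(0) > 0. If d_h > r·e^{−d_b τ}/(2√K) and d_m > c α_b, then B(t) → 0, H(t) → 0 and M(t) → 0 as t → ∞; that is, the extinction equilibrium (0, 0, 0) is globally attracting. -/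
/-!
Each component is trapped under a decaying exponential by a first-touching-time comparison.
Since the survival factor is at most `e^{-d_b τ}` and `r h²/(K + h²) ≤ r h/(2√K)` (AM–GM), the
adult bees satisfy `H'(t) ≤ β H(t - τ) - d_h H(t)` with `β = r e^{-d_b τ}/(2√K) < d_h`; for
`ν > 0` with `β e^{ντ} + ν < d_h`, `C e^{-νt}` is a strict supersolution of this delay
inequality. Then `B' ≤ (r/(2√K)) C e^{-νt} - d_b B` and `M' ≤ -(d_m - c α_b) M` make the brood
and the mites decay exponentially as well.
-/

open Real Filter Set

open Topology

theorem HasDerivAt.nonneg_of_eventually_le_left {g : ℝ → ℝ} {g' x : ℝ} (hg : HasDerivAt g g' x)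
    (hle : ∀ᶠ s in 𝓝[<] x, g s ≤ g x) : 0 ≤ g' := by
  have hslope : Tendsto (slope g x) (𝓝[<] x) (𝓝 g') :=
    (hasDerivAt_iff_tendsto_slope.mp hg).mono_left (nhdsWithin_mono _ fun s hs => ne_of_lt hs)
  refine ge_of_tendsto hslope ?_
  filter_upwards [hle, self_mem_nhdsWithin] with s hs hsx
  rw [slope_def_field]
  exact div_nonneg_of_nonpos (sub_nonpos.2 hs) (sub_nonpos.2 (le_of_lt hsx))

/-- At `t = sInf {s ≥ t₀ | 0 ≤ g s}` the function vanishes after being negative, so its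
derivative there cannot be negative. The hypothesis on the whole history `[t₀, t]` is what lets
this comparison handle delay equations. -/
theorem neg_of_hasDerivAt_neg_at_first_zero {g : ℝ → ℝ} {t₀ t₁ : ℝ} (h01 : t₀ ≤ t₁)
    (hg : ContinuousOn g (Ici t₀)) (hinit : ∀ s ∈ Icc t₀ t₁, g s < 0)
    (hzero : ∀ t > t₁, (∀ s ∈ Icc t₀ t, g s ≤ 0) → g t = 0 → ∃ g', HasDerivAt g g' t ∧ g' < 0) :
    ∀ t ≥ t₀, g t < 0 := by
  by_contra! hbad
  obtain ⟨u, hu, hgu⟩ := hbad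
  set A := Ici t₀ ∩ g ⁻¹' Ici 0
  have hA : IsClosed A := hg.preimage_isClosed_of_isClosed isClosed_Ici isClosed_Ici
  have hAbdd : BddBelow A := ⟨t₀, fun s hs => hs.1⟩
  set t := sInf A
  obtain ⟨ht₀t, hgt⟩ : t ∈ A := hA.csInf_mem ⟨u, hu, hgu⟩ hAbdd
  have hbefore : ∀ s ∈ Ico t₀ t, g s < 0 := fun s hs =>
    lt_of_not_ge fun h => (csInf_le hAbdd ⟨hs.1, h⟩).not_gt hs.2
  have ht₁t : t₁ < t := lt_of_not_ge fun h => (hinit t ⟨ht₀t, h⟩).not_ge hgt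
  have hleft : ∀ᶠ s in 𝓝[<] t, g s < 0 := by
    filter_upwards [Ioo_mem_nhdsLT (h01.trans_lt ht₁t)] with s hs using hbefore s ⟨hs.1.le, hs.2⟩
  have hcont : ContinuousAt g t := hg.continuousAt (Ici_mem_nhds (h01.trans_lt ht₁t))
  have hgt0 : g t = 0 :=
    le_antisymm (le_of_tendsto (hcont.tendsto.mono_left nhdsWithin_le_nhds)
      (hleft.mono fun s hs => hs.le)) hgt
  have hhist : ∀ s ∈ Icc t₀ t, g s ≤ 0 := fun s hs =>
    hs.2.eq_or_lt.elim (fun h => h ▸ hgt0.le) fun h => (hbefore s ⟨hs.1, h⟩).le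
  obtain ⟨g', hg', hneg⟩ := hzero t ht₁t hhist hgt0
  exact hneg.not_ge (hg'.nonneg_of_eventually_le_left (hleft.mono fun s hs => hgt0 ▸ hs.le))

theorem lt_of_hasDerivAt_lt_at_first_touch {f φ φ' : ℝ → ℝ} {t₀ t₁ : ℝ} (h01 : t₀ ≤ t₁)
    (hf : ContinuousOn f (Ici t₀)) (hφ : ∀ t, HasDerivAt φ (φ' t) t)
    (hinit : ∀ s ∈ Icc t₀ t₁, f s < φ s)
    (htouch : ∀ t > t₁, (∀ s ∈ Icc t₀ t, f s ≤ φ s) → f t = φ t →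
      ∃ f', HasDerivAt f f' t ∧ f' < φ' t) :
    ∀ t ≥ t₀, f t < φ t := by
  have hφc : Continuous φ := continuous_iff_continuousAt.2 fun t => (hφ t).continuousAt
  have key := neg_of_hasDerivAt_neg_at_first_zero (g := fun t => f t - φ t) h01
    (hf.sub hφc.continuousOn) (fun s hs => sub_neg.2 (hinit s hs)) fun t ht hhist hzero => by
      obtain ⟨f', hf', hlt⟩ := htouch t ht (fun s hs => sub_nonpos.1 (hhist s hs))
        (sub_eq_zero.1 hzero)
      exact ⟨f' - φ' t, hf'.sub (hφ t), sub_neg.2 hlt⟩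
  exact fun t ht => sub_neg.1 (key t ht)

theorem hasDerivAt_mul_exp_neg_mul (D μ t : ℝ) :
    HasDerivAt (fun t => D * exp (-μ * t)) (-μ * (D * exp (-μ * t))) t :=
  ((((hasDerivAt_id' t).const_mul (-μ)).exp).const_mul D).congr_deriv (by ring)

theorem tendsto_zero_of_nonneg_of_lt_mul_exp {f : ℝ → ℝ} {D μ : ℝ} (hμ : 0 < μ)
    (hnn : ∀ t > 0, 0 ≤ f t) (hle : ∀ t ≥ 0, f t < D * exp (-μ * t)) :
    Tendsto f atTop (𝓝 0) := by
  have hexp : Tendsto (fun t => D * exp (-μ * t)) atTop (𝓝 0) := by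
    simpa using (tendsto_exp_comp_nhds_zero.2
      ((tendsto_const_mul_atBot_of_neg (neg_neg_of_pos hμ)).2 tendsto_id)).const_mul D
  exact tendsto_of_tendsto_of_tendsto_of_le_of_le' tendsto_const_nhds hexp
    ((eventually_gt_atTop 0).mono hnn) ((eventually_ge_atTop 0).mono fun t ht => (hle t ht).le)

theorem exists_lt_mul_exp_of_deriv_le {f : ℝ → ℝ} {C ν d μ : ℝ} (hf : ContinuousOn f (Ici 0))
    (hC : 0 ≤ C) (hμν : μ ≤ ν) (hμd : μ < d)
    (hderiv : ∀ t > 0, ∃ f', HasDerivAt f f' t ∧ f' ≤ C * exp (-ν * t) - d * f t) :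
    ∃ D, ∀ t ≥ 0, f t < D * exp (-μ * t) := by
  set D := max (f 0 + 1) (C / (d - μ) + 1)
  have hCD : C < (d - μ) * D := by
    rw [← div_lt_iff₀' (sub_pos.2 hμd)]
    exact (lt_add_one _).trans_le (le_max_right _ _)
  refine ⟨D, lt_of_hasDerivAt_lt_at_first_touch le_rfl hf (hasDerivAt_mul_exp_neg_mul D μ)
    (fun s hs => ?_) fun t ht _ htouch => ?_⟩
  · rw [le_antisymm hs.2 hs.1, mul_zero, exp_zero, mul_one]
    exact (lt_add_one _).trans_le (le_max_left _ _)
  obtain ⟨f', hf', hle⟩ := hderiv t ht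
  have hexp : C * exp (-ν * t) ≤ C * exp (-μ * t) := by gcongr
  have hCD' : C * exp (-μ * t) < (d - μ) * D * exp (-μ * t) := by gcongr
  refine ⟨f', hf', ?_⟩
  rw [htouch] at hle
  linarith

theorem exists_pos_mul_exp_add_lt {β d τ : ℝ} (hβd : β < d) :
    ∃ ν > 0, β * exp (ν * τ) + ν < d := by
  have hcont : Continuous fun ν => β * exp (ν * τ) + ν := by fun_prop
  have hev : ∀ᶠ ν in 𝓝 0, β * exp (ν * τ) + ν < d :=
    hcont.continuousAt.eventually_lt continuousAt_const (by simpa using hβd)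
  obtain ⟨ν, hν, hνpos⟩ := ((hev.filter_mono nhdsWithin_le_nhds).and
    (self_mem_nhdsWithin (s := Ioi (0 : ℝ)))).exists
  exact ⟨ν, hνpos, hν⟩

theorem exists_lt_mul_exp_of_delay_deriv_le {f : ℝ → ℝ} {β d τ : ℝ} (hβ : 0 ≤ β) (hτ : 0 ≤ τ)
    (hβd : β < d) (hf : ContinuousOn f (Ici 0))
    (hderiv : ∀ t > τ, ∃ f', HasDerivAt f f' t ∧ f' ≤ β * f (t - τ) - d * f t) :
    ∃ ν > 0, ∃ D > 0, ∀ t ≥ 0, f t < D * exp (-ν * t) := by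
  obtain ⟨ν, hν, hνd⟩ := exists_pos_mul_exp_add_lt (τ := τ) hβd
  obtain ⟨m, hm⟩ := isCompact_Icc.exists_bound_of_continuousOn (hf.mono Icc_subset_Ici_self)
  have hm0 : 0 ≤ m := (norm_nonneg _).trans (hm 0 ⟨le_rfl, hτ⟩)
  set D := (m + 1) * exp (ν * τ)
  have hshift : ∀ t, D * exp (-ν * (t - τ)) = exp (ν * τ) * (D * exp (-ν * t)) := fun t => by
    rw [mul_left_comm, ← exp_add]; ring_nf
  refine ⟨ν, hν, D, by positivity, lt_of_hasDerivAt_lt_at_first_touch hτ hf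
    (hasDerivAt_mul_exp_neg_mul D ν) (fun s hs => ?_) fun t ht hhist htouch => ?_⟩
  · calc f s ≤ m := (le_abs_self _).trans (hm s hs)
      _ < m + 1 := lt_add_one m
      _ = D * exp (-ν * τ) := by
        rw [mul_assoc, ← exp_add, neg_mul, add_neg_cancel, exp_zero, mul_one]
      _ ≤ D * exp (-ν * s) := by gcongr ?_ * exp ?_; nlinarith [hs.2]
  obtain ⟨f', hf', hle⟩ := hderiv t ht
  have hdelay : f (t - τ) ≤ exp (ν * τ) * (D * exp (-ν * t)) :=
    hshift t ▸ hhist (t - τ) ⟨by linarith, by linarith⟩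
  have hφ : 0 < D * exp (-ν * t) := by positivity
  have hrate := mul_lt_mul_of_pos_right hνd hφ
  have hdelay' := mul_le_mul_of_nonneg_left hdelay hβ
  refine ⟨f', hf', ?_⟩
  rw [htouch] at hle
  linarith

theorem mul_sq_div_add_sq_le {r K h : ℝ} (hr : 0 ≤ r) (hK : 0 < K) (hh : 0 ≤ h) :
    r * h ^ 2 / (K + h ^ 2) ≤ r / (2 * √K) * h := by
  have hsq : √K ^ 2 = K := sq_sqrt hK.le
  rw [div_mul_eq_mul_div, div_le_div_iff₀ (by positivity) (by positivity)]
  nlinarith [mul_nonneg hr hh, sq_nonneg (√K - h)]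

theorem esurv_le_exp_neg_mul {db αb a τ t : ℝ} {B M : ℝ → ℝ} (hτ : 0 ≤ τ)
    (hint : IntervalIntegrable (fun s => db + αb * M s / (a + B s)) MeasureTheory.volume (t - τ) t)
    (hnn : ∀ s ∈ Icc (t - τ) t, 0 ≤ αb * M s / (a + B s)) :
    Esurv db αb a τ B M t ≤ exp (-db * τ) := by
  have hmono : ∫ _ in (t - τ)..t, db ≤ ∫ s in (t - τ)..t, (db + αb * M s / (a + B s)) :=
    intervalIntegral.integral_mono_on (by linarith) intervalIntegrable_const hint
      fun s hs => le_add_of_nonneg_right (hnn s hs)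
  rw [intervalIntegral.integral_const, smul_eq_mul, sub_sub_cancel] at hmono
  rw [Esurv, exp_le_exp]
  linarith

namespace BHMSolution

variable {r K db dh dm αb αh c a τ : ℝ} {B₀ B H M : ℝ → ℝ}

theorem esurv_le (hsol : BHMSolution r K db dh dm αb αh c a τ B₀ B H M) (ha : 0 ≤ a)
    (hαb : 0 ≤ αb) (hτ : 0 ≤ τ) (hpos : ∀ t > (0 : ℝ), 0 < B t ∧ 0 < H t ∧ 0 < M t)
    {t : ℝ} (ht : τ < t) : Esurv db αb a τ B M t ≤ exp (-db * τ) := by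
  have hsub : Icc (t - τ) t ⊆ Ici (-τ) := fun s hs => by simp only [mem_Ici]; linarith [hs.1]
  have hspos : ∀ s ∈ Icc (t - τ) t, 0 < s := fun s hs => by linarith [hs.1]
  have hden : ∀ s ∈ Icc (t - τ) t, 0 < a + B s := fun s hs =>
    add_pos_of_nonneg_of_pos ha (hpos s (hspos s hs)).1
  refine esurv_le_exp_neg_mul hτ (ContinuousOn.intervalIntegrable_of_Icc (by linarith) ?_)
    fun s hs => div_nonneg (mul_nonneg hαb (hpos s (hspos s hs)).2.2.le) (hden s hs).le
  exact continuousOn_const.add ((continuousOn_const.mul (hsol.cont_M.mono hsub)).div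
    (continuousOn_const.add (hsol.cont_B.mono hsub)) fun s hs => (hden s hs).ne')

theorem hasDerivAt_H_le (hsol : BHMSolution r K db dh dm αb αh c a τ B₀ B H M) (hr : 0 ≤ r)
    (hK : 0 < K) (ha : 0 ≤ a) (hαb : 0 ≤ αb) (hαh : 0 ≤ αh) (hτ : 0 ≤ τ)
    (hpos : ∀ t > (0 : ℝ), 0 < B t ∧ 0 < H t ∧ 0 < M t) :
    ∀ t > τ, ∃ H', HasDerivAt H H' t ∧
      H' ≤ r * exp (-db * τ) / (2 * √K) * H (t - τ) - dh * H t := by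
  intro t ht
  obtain ⟨-, hHt, hMt⟩ := hpos t (by linarith)
  have hHd : 0 < H (t - τ) := (hpos (t - τ) (by linarith)).2.1
  have hbirth : Esurv db αb a τ B M t * (r * H (t - τ) ^ 2 / (K + H (t - τ) ^ 2))
      ≤ exp (-db * τ) * (r / (2 * √K) * H (t - τ)) :=
    mul_le_mul (hsol.esurv_le ha hαb hτ hpos ht) (mul_sq_div_add_sq_le hr hK hHd.le)
      (by positivity) (exp_pos _).le
  have hmite : 0 ≤ αh * H t * M t / (a + H t) := by positivity
  refine ⟨_, hsol.deriv_H₂ t ht, ?_⟩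
  calc _ ≤ exp (-db * τ) * (r / (2 * √K) * H (t - τ)) - dh * H t := by linarith
    _ = _ := by ring

theorem hasDerivAt_B_le (hsol : BHMSolution r K db dh dm αb αh c a τ B₀ B H M) (hr : 0 ≤ r)
    (hK : 0 < K) (ha : 0 ≤ a) (hαb : 0 ≤ αb)
    (hB₀pos : ∀ t ∈ Icc (-τ) (0 : ℝ), 0 < B₀ t)
    (hpos : ∀ t > (0 : ℝ), 0 < B t ∧ 0 < H t ∧ 0 < M t) :
    ∀ t > 0, ∃ B', HasDerivAt B B' t ∧ B' ≤ r / (2 * √K) * H t - db * B t := by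
  intro t ht
  obtain ⟨hBt, hHt, hMt⟩ := hpos t ht
  have hbirth := mul_sq_div_add_sq_le hr hK hHt.le
  have hmite : 0 ≤ αb * B t * M t / (a + B t) := by positivity
  have hE : 0 < Esurv db αb a τ B M t := exp_pos _
  rcases le_or_gt t τ with htτ | htτ
  · have hB₀ := hB₀pos (t - τ) ⟨by linarith, by linarith⟩
    have hemerge : 0 ≤ Esurv db αb a τ B M t * B₀ (t - τ) := by positivity
    exact ⟨_, hsol.deriv_B₁ t ⟨ht, htτ⟩, by linarith⟩
  · have hemerge : 0 ≤ Esurv db αb a τ B M t * (r * H (t - τ) ^ 2 / (K + H (t - τ) ^ 2)) := by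
      positivity
    exact ⟨_, hsol.deriv_B₂ t htτ, by linarith⟩

theorem hasDerivAt_M_le (hsol : BHMSolution r K db dh dm αb αh c a τ B₀ B H M) (ha : 0 ≤ a)
    (hαb : 0 ≤ αb) (hc : 0 ≤ c) (hpos : ∀ t > (0 : ℝ), 0 < B t ∧ 0 < H t ∧ 0 < M t) :
    ∀ t > 0, ∃ M', HasDerivAt M M' t ∧ M' ≤ c * αb * M t - dm * M t := by
  intro t ht
  obtain ⟨hBt, -, hMt⟩ := hpos t ht
  have hinfect : c * αb * B t * M t / (a + B t) ≤ c * αb * M t := by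
    rw [div_le_iff₀ (by positivity)]
    nlinarith [mul_nonneg (mul_nonneg hc hαb) hMt.le]
  exact ⟨_, hsol.deriv_M t ht, by linarith⟩

end BHMSolution

theorem bhm_extinction_global_general (r K db dh dm αb αh c a τ : ℝ)
    (hr : 0 < r) (hK : 0 < K) (hdb : 0 < db)
    (hαb : 0 < αb) (hαh : 0 < αh) (hc : 0 < c) (ha : 0 < a) (hτ : 0 < τ)
    (B₀ B H M : ℝ → ℝ)
    (hsol : BHMSolution r K db dh dm αb αh c a τ B₀ B H M)
    (hB₀pos : ∀ t ∈ Set.Icc (-τ) (0 : ℝ), 0 < B₀ t)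
    (hpos : ∀ t > (0 : ℝ), 0 < B t ∧ 0 < H t ∧ 0 < M t)
    (hdh_big : r * Real.exp (-db * τ) / (2 * Real.sqrt K) < dh)
    (hdm_big : c * αb < dm) :
    Filter.Tendsto B Filter.atTop (nhds 0) ∧
      Filter.Tendsto H Filter.atTop (nhds 0) ∧
      Filter.Tendsto M Filter.atTop (nhds 0) := by
  have hIci : Ici (0 : ℝ) ⊆ Ici (-τ) := Ici_subset_Ici.2 (by linarith)
  obtain ⟨ν, hν, C, hC, hH⟩ := exists_lt_mul_exp_of_delay_deriv_le (by positivity) hτ.le hdh_big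
    (hsol.cont_H.mono hIci) (hsol.hasDerivAt_H_le hr.le hK ha.le hαb.le hαh.le hτ.le hpos)
  have hμB : 0 < min ν db / 2 := by positivity
  obtain ⟨DB, hB⟩ := exists_lt_mul_exp_of_deriv_le (C := r / (2 * √K) * C) (ν := ν)
    (d := db) (μ := min ν db / 2)
    (hsol.cont_B.mono hIci) (by positivity) (by linarith [min_le_left ν db])
    (by linarith [min_le_right ν db]) fun t ht => by
      obtain ⟨B', hB', hle⟩ := hsol.hasDerivAt_B_le hr.le hK ha.le hαb.le hB₀pos hpos t ht
      have hHt := (hH t ht.le).le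
      refine ⟨B', hB', hle.trans ?_⟩
      rw [mul_assoc]
      gcongr
  obtain ⟨DM, hM⟩ := exists_lt_mul_exp_of_deriv_le (C := 0) (ν := (dm - c * αb) / 2)
    (d := dm - c * αb) (hsol.cont_M.mono hIci) le_rfl le_rfl (by linarith) fun t ht => by
      obtain ⟨M', hM', hle⟩ := hsol.hasDerivAt_M_le ha.le hαb.le hc.le hpos t ht
      exact ⟨M', hM', by linarith⟩
  exact ⟨tendsto_zero_of_nonneg_of_lt_mul_exp hμB (fun t ht => (hpos t ht).1.le) hB,
    tendsto_zero_of_nonneg_of_lt_mul_exp hν (fun t ht => (hpos t ht).2.1.le) hH,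
    tendsto_zero_of_nonneg_of_lt_mul_exp (by linarith) (fun t ht => (hpos t ht).2.2.le) hM⟩

/-- global attractivity of the extinction equilibrium when
`d_h > r e^{-d_b τ}/(2√K)` and `d_m > c α_b`. -/
theorem bhm_extinction_global (r K db dh dm αb αh c a τ : ℝ)
    (hr : 0 < r) (hK : 0 < K) (hdb : 0 < db) (hdh : 0 < dh) (hdm : 0 < dm)
    (hαb : 0 < αb) (hαh : 0 < αh) (hc : 0 < c) (ha : 0 < a) (hτ : 0 < τ)
    (B₀ B H M : ℝ → ℝ)
    (hsol : BHMSolution r K db dh dm αb αh c a τ B₀ B H M)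
    (hB₀pos : ∀ t ∈ Set.Icc (-τ) (0 : ℝ), 0 < B₀ t)
    (hH0 : 0 < H 0) (hM0 : 0 < M 0)
    (hpos : ∀ t > (0 : ℝ), 0 < B t ∧ 0 < H t ∧ 0 < M t)
    (hdh_big : r * Real.exp (-db * τ) / (2 * Real.sqrt K) < dh)
    (hdm_big : c * αb < dm) :
    Filter.Tendsto B Filter.atTop (nhds 0) ∧
      Filter.Tendsto H Filter.atTop (nhds 0) ∧
      Filter.Tendsto M Filter.atTop (nhds 0) :=
  bhm_extinction_global_general r K db dh dm αb αh c a τ hr hK hdb hαb hαh hc ha hτ B₀ B H M hsol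
    hB₀pos hpos hdh_big hdm_big
end
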